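/- arXiv:1407.2197 — 4 statements merged into one kernel-verified Lean document; each statement's English description precedes it below -/
import Mathlib

section
/- Fix integers d ≥ 2 and y₀ with 0 ≤ y₀ ≤ d − 2, and let m = d − 2. For every n ≥ 0, the corridor number c^{(m)}_{n,y₀} satisfies c^{(m)}_{n,y₀} = σ_{n,⌊(n+y₀)/2⌋} − σ_{n,⌊(n+y₀+d)/2⌋}, where σ is the circular Pascal array of order d with initial offset y₀. -/
noncomputable def binomZ (n : ℕ) (x : ℤ) : ℕ := if 0 ≤ x then n.choose x.toNat else 0

noncomputable def circPascal (d y0 n : ℕ) (k : ℤ) : ℕ :=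
  ∑ i ∈ Finset.range (y0 + 1), ∑ᶠ j : ℤ, binomZ n (k - i + d * j)

/-- One residue-class column sum. -/
noncomputable def TT (d n : ℕ) (a : ℤ) : ℕ := ∑ᶠ j : ℤ, binomZ n (a + d * j)

lemma binomZ_ne_zero {n : ℕ} {x : ℤ} (h : binomZ n x ≠ 0) : 0 ≤ x ∧ x ≤ n := by
  unfold binomZ at h
  split at h
  · next hx =>
    refine ⟨hx, ?_⟩
    by_contra hle
    push_neg at hle
    have : (n : ℤ) < x.toNat := by omega
    have : n < x.toNat := by exact_mod_cast this
    exact h (Nat.choose_eq_zero_of_lt this)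
  · exact absurd rfl h

lemma TT_support_finite (d n : ℕ) (hd : 1 ≤ d) (a : ℤ) :
    (Function.support fun j : ℤ => binomZ n (a + d * j)).Finite := by
  have hinj : Function.Injective fun j : ℤ => a + d * j := by
    intro x y hxy
    simp only at hxy
    have hd0 : (d:ℤ) ≠ 0 := by exact_mod_cast (by omega : d ≠ 0)
    exact mul_left_cancel₀ hd0 (by omega)
  have hsub : (Function.support fun j : ℤ => binomZ n (a + d * j)) ⊆
      (fun j : ℤ => a + d * j) ⁻¹' (Set.Icc 0 n) := by
    intro j hj
    have := binomZ_ne_zero hj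
    exact ⟨this.1, this.2⟩
  exact Set.Finite.subset (Set.Finite.preimage hinj.injOn (Set.finite_Icc _ _)) hsub

lemma circPascal_eq (d y0 n : ℕ) (k : ℤ) :
    circPascal d y0 n k = ∑ i ∈ Finset.range (y0 + 1), TT d n (k - i) := rfl

lemma TT_period (d n : ℕ) (a : ℤ) : TT d n (a + d) = TT d n a := by
  unfold TT
  rw [← finsum_comp_equiv (Equiv.addRight (1:ℤ)) (f := fun j => binomZ n (a + d * j))]
  apply finsum_congr
  intro j
  simp [Equiv.addRight]
  ring_nf

lemma binomZ_succ (n : ℕ) (x : ℤ) : binomZ (n+1) x = binomZ n x + binomZ n (x - 1) := by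
  unfold binomZ
  rcases lt_trichotomy x 0 with h | h | h
  · rw [if_neg (by omega), if_neg (by omega), if_neg (by omega)]
  · subst h; simp
  · rw [if_pos (by omega), if_pos (by omega), if_pos (by omega)]
    have h1 : x.toNat = (x-1).toNat + 1 := by omega
    rw [h1, Nat.choose_succ_succ']
    omega

lemma TT_succ (d n : ℕ) (hd : 1 ≤ d) (a : ℤ) :
    TT d (n+1) a = TT d n a + TT d n (a - 1) := by
  unfold TT
  have : ∀ j : ℤ, binomZ (n+1) (a + d * j) = binomZ n (a + d * j) + binomZ n ((a-1) + d * j) := by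
    intro j
    rw [binomZ_succ]
    ring_nf
  rw [finsum_congr this, finsum_add_distrib (TT_support_finite d n hd a)
    (TT_support_finite d n hd (a-1))]

lemma TT_zero (d : ℕ) (hd : 1 ≤ d) (a : ℤ) :
    TT d 0 a = if (d:ℤ) ∣ a then 1 else 0 := by
  have hd0 : (d:ℤ) ≠ 0 := by exact_mod_cast (by omega : d ≠ 0)
  unfold TT
  have hb : ∀ x : ℤ, binomZ 0 x = if x = 0 then 1 else 0 := by
    intro x
    unfold binomZ
    rcases lt_trichotomy x 0 with h | h | h
    · rw [if_neg (by omega), if_neg (by omega)]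
    · subst h; simp
    · rw [if_pos (by omega), if_neg (by omega)]
      exact Nat.choose_eq_zero_of_lt (by omega)
  by_cases hdvd : (d:ℤ) ∣ a
  · obtain ⟨c, hc⟩ := hdvd
    rw [if_pos ⟨c, hc⟩]
    rw [finsum_eq_single _ (-c)]
    · rw [hb]; rw [if_pos (by rw [hc]; ring)]
    · intro j hj
      rw [hb, if_neg]
      intro h
      apply hj
      have h2 : (d:ℤ) * j = d * (-c) := by rw [mul_neg]; omega
      exact mul_left_cancel₀ hd0 h2
  · rw [if_neg hdvd]
    apply finsum_eq_zero_of_forall_eq_zero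
    intro j
    rw [hb, if_neg]
    intro h
    exact hdvd ⟨-j, by rw [mul_neg]; omega⟩

/-- sum over a full period is translation invariant -/
lemma period_sum_succ (d n : ℕ) (a : ℤ) :
    ∑ i ∈ Finset.range d, TT d n (a + 1 - i) = ∑ i ∈ Finset.range d, TT d n (a - i) := by
  have h1 : ∑ i ∈ Finset.range (d+1), TT d n (a + 1 - i)
      = TT d n (a+1) + ∑ i ∈ Finset.range d, TT d n (a - i) := by
    rw [Finset.sum_range_succ']
    rw [add_comm]
    congr 1
    · norm_num
    · apply Finset.sum_congr rfl
      intro i _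
      congr 1
      push_cast; ring
  have h2 : ∑ i ∈ Finset.range (d+1), TT d n (a + 1 - i)
      = ∑ i ∈ Finset.range d, TT d n (a + 1 - i) + TT d n (a + 1 - d) := by
    rw [Finset.sum_range_succ]
  have h3 : TT d n (a + 1 - d) = TT d n (a + 1) := by
    have := (TT_period d n (a + 1 - d)).symm
    simpa using this
  omega

lemma period_sum_shift (d n : ℕ) (a : ℤ) (t : ℕ) :
    ∑ i ∈ Finset.range d, TT d n (a + t - i) = ∑ i ∈ Finset.range d, TT d n (a - i) := by
  induction t with
  | zero => simp
  | succ t ih =>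
    have : ∀ i : ℕ, a + (t+1:ℕ) - i = (a + t) + 1 - i := by intro i; push_cast; ring
    rw [Finset.sum_congr rfl (fun i _ => by rw [this i])]
    rw [period_sum_succ d n (a + t)]
    exact ih

noncomputable def Qz (d n y : ℕ) (k : ℤ) : ℤ := ∑ i ∈ Finset.range (y+1), (TT d n (k - i) : ℤ)

noncomputable def Rz (d n y : ℕ) : ℤ :=
  Qz d n y (((n+y)/2 : ℕ)) - Qz d n y (((n+y+d)/2 : ℕ))

lemma Qz_congr (d n y : ℕ) {k k' : ℤ} (h : k = k') : Qz d n y k = Qz d n y k' := by rw [h]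

lemma Qz_pascal (d n y : ℕ) (hd : 1 ≤ d) (k : ℤ) :
    Qz d (n+1) (y+1) k = Qz d n (y+2) k + Qz d n y (k - 1) := by
  unfold Qz
  have step : ∀ i ∈ Finset.range (y+2), (TT d (n+1) (k - i) : ℤ)
      = (TT d n (k - i) : ℤ) + (TT d n (k - 1 - i) : ℤ) := by
    intro i _
    rw [TT_succ d n hd (k - i)]
    push_cast
    ring_nf
  rw [Finset.sum_congr rfl step, Finset.sum_add_distrib]
  have h1 : ∑ i ∈ Finset.range (y+2+1), (TT d n (k - i) : ℤ)
      = ∑ i ∈ Finset.range (y+2), (TT d n (k - i) : ℤ) + (TT d n (k - (y+2)) : ℤ) := by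
    rw [Finset.sum_range_succ]; push_cast; ring_nf
  have h2 : ∑ i ∈ Finset.range (y+2), (TT d n (k - 1 - i) : ℤ)
      = ∑ i ∈ Finset.range (y+1), (TT d n (k - 1 - i) : ℤ) + (TT d n (k - 1 - (y+1)) : ℤ) := by
    rw [Finset.sum_range_succ]; push_cast; ring_nf
  have h3 : (TT d n (k - 1 - (y+1)) : ℤ) = (TT d n (k - (y+2)) : ℤ) := by
    congr 1; push_cast; ring_nf
  rw [h2, h3]
  omega

lemma Rz_recS (d n y : ℕ) (hd : 1 ≤ d) :
    Rz d (n+1) (y+1) = Rz d n y + Rz d n (y+2) := by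
  unfold Rz
  have e1 : ((n+1) + (y+1)) / 2 = (n + y)/2 + 1 := by omega
  have e2 : ((n+1) + (y+1) + d) / 2 = (n + y + d)/2 + 1 := by omega
  have e3 : (n + (y+2)) / 2 = (n + y)/2 + 1 := by omega
  have e4 : (n + (y+2) + d) / 2 = (n + y + d)/2 + 1 := by omega
  rw [e1, e2, e3, e4]
  rw [Qz_pascal d n y hd, Qz_pascal d n y hd]
  have c1 : ((((n + y)/2 + 1 : ℕ) : ℤ) - 1) = (((n+y)/2 : ℕ) : ℤ) := by push_cast; ring
  have c2 : ((((n + y + d)/2 + 1 : ℕ) : ℤ) - 1) = (((n+y+d)/2 : ℕ) : ℤ) := by push_cast; ring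
  rw [Qz_congr d n y c1, Qz_congr d n y c2]
  ring

lemma Rz_rec0 (d n : ℕ) (hd : 1 ≤ d) :
    Rz d (n+1) 0 = Rz d n 1 := by
  unfold Rz Qz
  have e1 : ((n+1) + 0) / 2 = (n + 1)/2 := by omega
  have e2 : ((n+1) + 0 + d) / 2 = (n + 1 + d)/2 := by omega
  rw [e1, e2]
  simp only [Finset.sum_range_succ, Finset.sum_range_zero]
  rw [TT_succ d n hd, TT_succ d n hd]
  push_cast
  ring_nf

lemma Rz_top (d n : ℕ) (hd : 1 ≤ d) : Rz d n (d-1) = 0 := by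
  unfold Rz Qz
  have hr : d - 1 + 1 = d := by omega
  rw [hr]
  set K1 := (n + (d-1))/2 with hK1
  set K2 := (n + (d-1) + d)/2 with hK2
  have hle : K1 ≤ K2 := Nat.div_le_div_right (by omega)
  have := period_sum_shift d n (K1 : ℤ) (K2 - K1)
  have harg : ((K1 : ℤ) + ((K2 - K1 : ℕ) : ℤ)) = (K2 : ℤ) := by
    push_cast [Nat.cast_sub hle]; ring
  have hsum : ∑ i ∈ Finset.range d, TT d n ((K2:ℤ) - i) = ∑ i ∈ Finset.range d, TT d n ((K1:ℤ) - i) := by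
    rw [← this]
    apply Finset.sum_congr rfl
    intro i _
    congr 1
    omega
  have : ∑ i ∈ Finset.range d, (TT d n ((K2:ℤ) - i) : ℤ) = ∑ i ∈ Finset.range d, (TT d n ((K1:ℤ) - i) : ℤ) := by
    exact_mod_cast congrArg Nat.cast hsum
  omega


lemma not_dvd_of_bounds {d : ℕ} {x : ℤ} (h1 : -(d:ℤ) < x) (h2 : x < d) (h3 : x ≠ 0) :
    ¬ (d:ℤ) ∣ x := by
  rintro ⟨c, hc⟩
  have hd0 : (0:ℤ) ≤ d := by positivity
  rcases lt_trichotomy c 0 with h | h | h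
  · have : (d:ℤ) * c ≤ d * (-1) := mul_le_mul_of_nonneg_left (by omega) hd0
    omega
  · subst h; simp at hc; exact h3 hc
  · have : (d:ℤ) * 1 ≤ d * c := mul_le_mul_of_nonneg_left (by omega) hd0
    omega

lemma Rz_zero (d y : ℕ) (hd : 2 ≤ d) (hy : y ≤ d - 2) : Rz d 0 y = 1 := by
  unfold Rz Qz
  have hd1 : 1 ≤ d := by omega
  set K1 := (0 + y)/2 with hK1
  set K2 := (0 + y + d)/2 with hK2
  have hK1y : K1 ≤ y := by omega
  have hK2a : y + 1 ≤ K2 := by omega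
  have hK2b : K2 ≤ d - 1 := by omega
  have h1 : ∑ i ∈ Finset.range (y+1), (TT d 0 ((K1:ℤ) - i) : ℤ) = 1 := by
    rw [Finset.sum_eq_single K1]
    · rw [TT_zero d hd1, if_pos (by simp)]
      norm_num
    · intro i hi hne
      rw [TT_zero d hd1, if_neg]
      · norm_num
      · simp only [Finset.mem_range] at hi
        apply not_dvd_of_bounds (by omega) (by omega) (by omega)
    · intro h
      exact absurd (Finset.mem_range.mpr (by omega)) h
  have h2 : ∑ i ∈ Finset.range (y+1), (TT d 0 ((K2:ℤ) - i) : ℤ) = 0 := by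
    apply Finset.sum_eq_zero
    intro i hi
    simp only [Finset.mem_range] at hi
    rw [TT_zero d hd1, if_neg]
    · norm_num
    · apply not_dvd_of_bounds (by omega) (by omega) (by omega)
  rw [h1, h2]
  ring



abbrev Corr (m n y : ℕ) := {r : Fin n → ℤ // (∀ i, r i = 1 ∨ r i = -1) ∧
    ∀ j : Fin n, 0 ≤ (y : ℤ) + ∑ i ∈ Finset.Iic j, r i ∧
      (y : ℤ) + ∑ i ∈ Finset.Iic j, r i ≤ (m : ℤ)}

noncomputable def corridorCount (m n y0 : ℕ) : ℕ :=
  Nat.card {r : Fin n → ℤ // (∀ i, r i = 1 ∨ r i = -1) ∧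
    ∀ j : Fin n, 0 ≤ (y0 : ℤ) + ∑ i ∈ Finset.Iic j, r i ∧
      (y0 : ℤ) + ∑ i ∈ Finset.Iic j, r i ≤ (m : ℤ)}

lemma corridorCount_eq (m n y : ℕ) : corridorCount m n y = Nat.card (Corr m n y) := rfl

instance corrFinite (m n y : ℕ) : Finite (Corr m n y) := by
  apply Finite.of_injective (fun r : Corr m n y => (fun i => decide (r.1 i = 1) : Fin n → Bool))
  intro r s h
  ext i
  have hr := r.2.1 i
  have hs := s.2.1 i
  have := congrFun h i
  simp only [decide_eq_decide] at this
  rcases hr with hr | hr <;> rcases hs with hs | hs <;> simp [hr, hs] at this ⊢ <;> omega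

lemma sum_Iic_zero {n : ℕ} (r : Fin (n+1) → ℤ) :
    ∑ i ∈ Finset.Iic (0 : Fin (n+1)), r i = r 0 := by
  have : Finset.Iic (0 : Fin (n+1)) = {0} := by
    ext i
    simp [Fin.le_zero_iff]
  rw [this, Finset.sum_singleton]

lemma Iic_succ {n : ℕ} (j : Fin n) :
    Finset.Iic (j.succ) = insert 0 ((Finset.Iic j).map ⟨Fin.succ, Fin.succ_injective n⟩) := by
  ext i
  simp only [Finset.mem_Iic, Finset.mem_insert, Finset.mem_map, Function.Embedding.coeFn_mk]
  induction i using Fin.cases with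
  | zero => simp [Fin.zero_le]
  | succ k =>
    simp only [Fin.succ_le_succ_iff]
    constructor
    · intro h; exact Or.inr ⟨k, h, rfl⟩
    · rintro (h | ⟨x, hx, hxe⟩)
      · exact absurd h (Fin.succ_ne_zero k)
      · have : x = k := Fin.succ_injective n hxe
        subst this
        exact hx

lemma sum_Iic_succ {n : ℕ} (r : Fin (n+1) → ℤ) (j : Fin n) :
    ∑ i ∈ Finset.Iic (j.succ), r i = r 0 + ∑ i ∈ Finset.Iic j, Fin.tail r i := by
  rw [Iic_succ, Finset.sum_insert, Finset.sum_map]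
  · rfl
  · simp only [Finset.mem_map, Function.Embedding.coeFn_mk]
    rintro ⟨x, _, hx⟩
    exact Fin.succ_ne_zero x hx

/-- Peeling an up-step. -/
noncomputable def corrUp (m n y : ℕ) (hy : y + 1 ≤ m) :
    {r : Corr m (n+1) y // r.1 0 = 1} ≃ Corr m n (y+1) where
  toFun r := ⟨Fin.tail r.1.1, by
    constructor
    · intro i; exact r.1.2.1 i.succ
    · intro j
      have h := r.1.2.2 j.succ
      rw [sum_Iic_succ, r.2] at h
      constructor
      · have := h.1; push_cast; push_cast at this; linarith
      · have := h.2; push_cast; push_cast at this; linarith⟩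
  invFun t := ⟨⟨Fin.cons 1 t.1, by
    constructor
    · intro i
      induction i using Fin.cases with
      | zero => left; simp
      | succ k => simpa using t.2.1 k
    · intro j
      induction j using Fin.cases with
      | zero =>
        rw [sum_Iic_zero]
        simp only [Fin.cons_zero]
        constructor
        · positivity
        · push_cast; omega
      | succ k =>
        rw [sum_Iic_succ]
        simp only [Fin.cons_zero, Fin.tail_cons]
        have h := t.2.2 k
        constructor
        · have := h.1; push_cast at this ⊢; linarith
        · have := h.2; push_cast at this ⊢; linarith⟩, by simp⟩
  left_inv r := by
    apply Subtype.ext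
    apply Subtype.ext
    have : r.1.1 0 = 1 := r.2
    simpa [← this] using Fin.cons_self_tail r.1.1
  right_inv t := by
    apply Subtype.ext
    simp

/-- Peeling a down-step. -/
noncomputable def corrDown (m n y : ℕ) (hy : y + 1 ≤ m) :
    {r : Corr m (n+1) (y+1) // r.1 0 = -1} ≃ Corr m n y where
  toFun r := ⟨Fin.tail r.1.1, by
    constructor
    · intro i; exact r.1.2.1 i.succ
    · intro j
      have h := r.1.2.2 j.succ
      rw [sum_Iic_succ, r.2] at h
      constructor
      · have := h.1; push_cast; push_cast at this; linarith
      · have := h.2; push_cast; push_cast at this; linarith⟩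
  invFun t := ⟨⟨Fin.cons (-1) t.1, by
    constructor
    · intro i
      induction i using Fin.cases with
      | zero => right; simp
      | succ k => simpa using t.2.1 k
    · intro j
      induction j using Fin.cases with
      | zero =>
        rw [sum_Iic_zero]
        simp only [Fin.cons_zero]
        constructor
        · push_cast; omega
        · push_cast; omega
      | succ k =>
        rw [sum_Iic_succ]
        simp only [Fin.cons_zero, Fin.tail_cons]
        have h := t.2.2 k
        constructor
        · have := h.1; push_cast at this ⊢; linarith
        · have := h.2; push_cast at this ⊢; linarith⟩, by simp⟩
  left_inv r := by
    apply Subtype.ext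
    apply Subtype.ext
    have : r.1.1 0 = -1 := r.2
    simpa [← this] using Fin.cons_self_tail r.1.1
  right_inv t := by
    apply Subtype.ext
    simp

lemma upEmpty (m n y : ℕ) (hy : m ≤ y) : IsEmpty {r : Corr m (n+1) y // r.1 0 = 1} := by
  constructor
  rintro ⟨r, hr⟩
  have h := (r.2.2 0).2
  rw [sum_Iic_zero, hr] at h
  have : (m:ℤ) ≤ y := by exact_mod_cast hy
  omega

lemma downEmpty (m n : ℕ) : IsEmpty {r : Corr m (n+1) 0 // r.1 0 = -1} := by
  constructor
  rintro ⟨r, hr⟩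
  have h := (r.2.2 0).1
  rw [sum_Iic_zero, hr] at h
  omega

lemma corr_split (m n y : ℕ) :
    Nat.card (Corr m (n+1) y) =
      Nat.card {r : Corr m (n+1) y // r.1 0 = 1} +
      Nat.card {r : Corr m (n+1) y // r.1 0 = -1} := by
  have e1 : Corr m (n+1) y ≃
      {r : Corr m (n+1) y // r.1 0 = 1} ⊕ {r : Corr m (n+1) y // ¬ r.1 0 = 1} :=
    (Equiv.sumCompl _).symm
  have e2 : {r : Corr m (n+1) y // ¬ r.1 0 = 1} ≃ {r : Corr m (n+1) y // r.1 0 = -1} := by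
    apply Equiv.subtypeEquivRight
    intro r
    rcases r.2.1 0 with h | h <;> simp [h]
  rw [Nat.card_congr (e1.trans (Equiv.sumCongr (Equiv.refl _) e2)), Nat.card_sum]

lemma corridorCount_zero (m y : ℕ) : corridorCount m 0 y = 1 := by
  rw [corridorCount_eq]
  have : ∀ r : Corr m 0 y, r = ⟨(fun i => Fin.elim0 i), by
      exact ⟨fun i => Fin.elim0 i, fun j => Fin.elim0 j⟩⟩ := by
    intro r
    apply Subtype.ext
    funext i
    exact Fin.elim0 i
  haveI : Unique (Corr m 0 y) := ⟨⟨_⟩, this⟩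
  exact Nat.card_unique

lemma corridorCount_mid (m n y : ℕ) (hy : y + 2 ≤ m) :
    corridorCount m (n+1) (y+1) = corridorCount m n y + corridorCount m n (y+2) := by
  rw [corridorCount_eq, corridorCount_eq, corridorCount_eq, corr_split]
  rw [Nat.card_congr (corrDown m n y (by omega)), Nat.card_congr (corrUp m n (y+1) (by omega))]
  have h12 : y + 1 + 1 = y + 2 := by omega
  rw [h12, Nat.add_comm]

lemma corridorCount_topS (m n y : ℕ) (hy : y + 1 = m) :
    corridorCount m (n+1) (y+1) = corridorCount m n y := by
  rw [corridorCount_eq, corridorCount_eq, corr_split]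
  rw [Nat.card_congr (corrDown m n y (by omega))]
  haveI := upEmpty m n (y+1) (by omega)
  rw [Nat.card_of_isEmpty]
  omega

lemma corridorCount_bot (m n : ℕ) (hm : 1 ≤ m) :
    corridorCount m (n+1) 0 = corridorCount m n 1 := by
  rw [corridorCount_eq, corridorCount_eq, corr_split]
  rw [Nat.card_congr (corrUp m n 0 (by omega))]
  haveI := downEmpty m n
  have h0 : Nat.card {r : Corr m (n+1) 0 // r.1 0 = -1} = 0 := Nat.card_of_isEmpty
  rw [h0]
  norm_num

lemma corridorCount_bot0 (n : ℕ) : corridorCount 0 (n+1) 0 = 0 := by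
  rw [corridorCount_eq, corr_split]
  haveI := downEmpty 0 n
  haveI := upEmpty 0 n 0 (by omega)
  rw [Nat.card_of_isEmpty, Nat.card_of_isEmpty]


lemma circPascal_cast (d y0 n : ℕ) (k : ℤ) : (circPascal d y0 n k : ℤ) = Qz d n y0 k := by
  rw [circPascal_eq]
  unfold Qz
  push_cast
  rfl

/-- Ault–Kicey, Theorem (main): for `d ≥ 2`, `0 ≤ y₀ ≤ d−2`, `m = d−2`, the corridor number
`c^{(m)}_{n,y₀}` equals `σ_{n,⌊(n+y₀)/2⌋} − σ_{n,⌊(n+y₀+d)/2⌋}` in the circular Pascal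
array of order `d` with initial offset `y₀`. -/
theorem corridor_eq_circPascal_diff (d y0 : ℕ) (hd : 2 ≤ d) (hy : y0 ≤ d - 2) (n : ℕ) :
    (corridorCount (d - 2) n y0 : ℤ) =
      (circPascal d y0 n (((n + y0) / 2 : ℕ) : ℤ) : ℤ) -
      (circPascal d y0 n (((n + y0 + d) / 2 : ℕ) : ℤ) : ℤ) := by
  have hd1 : 1 ≤ d := by omega
  have main : ∀ n y, y ≤ d - 2 → (corridorCount (d-2) n y : ℤ) = Rz d n y := by
    intro n
    induction n with
    | zero =>
      intro y hyy
      rw [corridorCount_zero, Rz_zero d y hd hyy]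
      norm_num
    | succ n ih =>
      intro y hyy
      cases y with
      | zero =>
        by_cases hm : d - 2 = 0
        · rw [hm, corridorCount_bot0, Rz_rec0 d n hd1]
          have h1 : 1 = d - 1 := by omega
          rw [h1, Rz_top d n hd1]
          norm_num
        · rw [corridorCount_bot (d-2) n (by omega), Rz_rec0 d n hd1]
          exact ih 1 (by omega)
      | succ y' =>
        by_cases htop : y' + 1 = d - 2
        · rw [corridorCount_topS (d-2) n y' htop, Rz_recS d n y' hd1]
          have h2 : y' + 2 = d - 1 := by omega
          rw [h2, Rz_top d n hd1, ih y' (by omega)]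
          ring
        · rw [corridorCount_mid (d-2) n y' (by omega), Rz_recS d n y' hd1]
          push_cast
          rw [ih y' (by omega), ih (y'+2) (by omega)]
  rw [main n y0 hy]
  unfold Rz
  rw [circPascal_cast, circPascal_cast]
end

section
/- Fix integers d ≥ 2 and y₀ with 0 ≤ y₀ ≤ d − 2, and let σ be the circular Pascal array of order d with initial offset y₀. For every n ≥ 0, the entry σ_{n,⌊(n+y₀)/2⌋} is a maximum value of the n-th row; that is, σ_{n,k} ≤ σ_{n,⌊(n+y₀)/2⌋} for every k ∈ ℤ. -/
namespace CPaux

lemma binomZ_ne_zero {n : ℕ} {x : ℤ} (h : binomZ n x ≠ 0) : 0 ≤ x ∧ x ≤ n := by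
  unfold binomZ at h
  split_ifs at h with h0
  · refine ⟨h0, ?_⟩
    by_contra hx
    push_neg at hx
    have : n < x.toNat := by omega
    simp [Nat.choose_eq_zero_of_lt this] at h
  · simp at h

lemma binomZ_symm (n : ℕ) (x : ℤ) : binomZ n ((n : ℤ) - x) = binomZ n x := by
  unfold binomZ
  by_cases h0 : 0 ≤ x
  · by_cases hn : x ≤ (n : ℤ)
    · rw [if_pos (by omega : (0:ℤ) ≤ (n:ℤ) - x), if_pos h0]
      have hx : x.toNat ≤ n := by omega
      have h3 : ((n:ℤ) - x).toNat = n - x.toNat := by omega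
      rw [h3, Nat.choose_symm hx]
    · rw [if_neg (by omega : ¬ (0:ℤ) ≤ (n:ℤ) - x), if_pos h0]
      exact (Nat.choose_eq_zero_of_lt (by omega)).symm
  · rw [if_neg h0, if_pos (by omega)]
    exact Nat.choose_eq_zero_of_lt (by omega)

lemma binomZ_succ (n : ℕ) (x : ℤ) : binomZ (n + 1) x = binomZ n x + binomZ n (x - 1) := by
  unfold binomZ
  by_cases h0 : 0 ≤ x
  · rw [if_pos h0]
    by_cases h1 : 0 ≤ x - 1
    · rw [if_pos h0, if_pos h1]
      have hx : x.toNat = (x - 1).toNat + 1 := by omega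
      rw [hx, Nat.choose_succ_succ]
      simp only [Nat.succ_eq_add_one]
      omega
    · have hx0 : x = 0 := by omega
      subst hx0
      simp
  · rw [if_neg h0, if_neg h0, if_neg (by omega)]

noncomputable def T (d n : ℕ) (r : ℤ) : ℕ := ∑ᶠ j : ℤ, binomZ n (r + d * j)

lemma T_support {d n : ℕ} (hd : 1 ≤ d) (r : ℤ) :
    (Function.support fun j : ℤ => binomZ n (r + d * j)).Finite := by
  apply Set.Finite.subset (Set.finite_Icc (-(|r| + n)) (|r| + n))
  intro j hj
  have h := binomZ_ne_zero hj
  simp only [Set.mem_Icc]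
  have hd' : (1:ℤ) ≤ d := by exact_mod_cast hd
  have hn0 : (0:ℤ) ≤ n := Int.natCast_nonneg n
  have h1 : -(|r|) ≤ (d:ℤ) * j := by linarith [le_abs_self r]
  have h2 : (d:ℤ) * j ≤ n + |r| := by linarith [neg_abs_le r]
  rcases le_or_gt 0 j with hj0 | hj0
  · have h3 : j ≤ (d:ℤ) * j := by nlinarith
    exact ⟨by linarith [abs_nonneg r], by linarith⟩
  · have h3 : (d:ℤ) * j ≤ j := by nlinarith
    exact ⟨by linarith, by linarith [abs_nonneg r]⟩

lemma T_shift (d n : ℕ) (hd : 1 ≤ d) (r t : ℤ) : T d n (r + d * t) = T d n r := by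
  unfold T
  calc ∑ᶠ j : ℤ, binomZ n (r + d * t + d * j)
      = ∑ᶠ j : ℤ, binomZ n (r + d * ((Equiv.addRight t) j)) := by
        apply finsum_congr
        intro j
        simp only [Equiv.coe_addRight]
        congr 1
        ring
    _ = ∑ᶠ j : ℤ, binomZ n (r + d * j) := finsum_comp_equiv _ (f := fun x => binomZ n (r + d * x))

lemma T_symm (d n : ℕ) (r : ℤ) : T d n ((n : ℤ) - r) = T d n r := by
  unfold T
  calc ∑ᶠ j : ℤ, binomZ n ((n:ℤ) - r + d * j)
      = ∑ᶠ j : ℤ, binomZ n (r + d * ((Equiv.neg ℤ) j)) := by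
        apply finsum_congr
        intro j
        simp only [Equiv.neg_apply]
        rw [← binomZ_symm n (r + d * (-j))]
        congr 1
        ring
    _ = ∑ᶠ j : ℤ, binomZ n (r + d * j) := finsum_comp_equiv _ (f := fun x => binomZ n (r + d * x))

lemma T_succ (d n : ℕ) (hd : 1 ≤ d) (r : ℤ) :
    T d (n + 1) r = T d n r + T d n (r - 1) := by
  unfold T
  have h1 := T_support (n := n) hd r
  have h2 := T_support (n := n) hd (r - 1)
  have he : ∀ j : ℤ, binomZ (n+1) (r + d * j) = binomZ n (r + d * j) + binomZ n (r - 1 + d * j) := by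
    intro j
    rw [binomZ_succ]
    congr 2
    ring
  rw [finsum_congr he, finsum_add_distrib h1 h2]

lemma T_zero (d : ℕ) (hd : 1 ≤ d) (r : ℤ) :
    T d 0 r = if (d : ℤ) ∣ r then 1 else 0 := by
  unfold T
  have hd' : (1:ℤ) ≤ d := by exact_mod_cast hd
  have hb : ∀ x : ℤ, binomZ 0 x = if x = 0 then 1 else 0 := by
    intro x
    unfold binomZ
    split_ifs with h1 h2 h3
    · simp [show x.toNat = 0 by omega]
    · exact Nat.choose_eq_zero_of_lt (by omega : (0:ℕ) < x.toNat)
    · omega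
    · rfl
  split_ifs with hdr
  · obtain ⟨t, ht⟩ := hdr
    have hz : ∀ j : ℤ, j ≠ -t → binomZ 0 (r + d * j) = 0 := by
      intro j hj
      rw [hb, if_neg]
      intro hc
      apply hj
      have h0 : (d:ℤ) * (t + j) = 0 := by rw [mul_add, ← ht]; exact hc
      rcases mul_eq_zero.mp h0 with h | h
      · omega
      · omega
    rw [finsum_eq_single _ (-t) hz, hb, if_pos (by rw [ht]; ring)]
  · apply finsum_eq_zero_of_forall_eq_zero
    intro j
    rw [hb, if_neg]
    intro hc
    exact hdr ⟨-j, by linarith⟩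

lemma circPascal_eq_T (d y0 n : ℕ) (k : ℤ) :
    circPascal d y0 n k = ∑ i ∈ Finset.range (y0 + 1), T d n (k - i) := rfl

lemma cp_shift (d y0 n : ℕ) (hd : 1 ≤ d) (k t : ℤ) :
    circPascal d y0 n (k + d * t) = circPascal d y0 n k := by
  rw [circPascal_eq_T, circPascal_eq_T]
  apply Finset.sum_congr rfl
  intro i _
  rw [show k + (d:ℤ) * t - i = (k - i) + d * t by ring, T_shift d n hd]

lemma cp_symm (d y0 n : ℕ) (k : ℤ) :
    circPascal d y0 n ((n : ℤ) + y0 - k) = circPascal d y0 n k := by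
  rw [circPascal_eq_T, circPascal_eq_T]
  rw [← Finset.sum_range_reflect (fun i => T d n (k - i)) (y0 + 1)]
  apply Finset.sum_congr rfl
  intro i hi
  simp only [Finset.mem_range] at hi
  have hcast : (↑(y0 + 1 - 1 - i) : ℤ) = (y0 : ℤ) - i := by omega
  rw [hcast, show (n:ℤ) + y0 - k - i = (n:ℤ) - (k - ((y0:ℤ) - i)) by ring, T_symm]

lemma cp_succ (d y0 n : ℕ) (hd : 1 ≤ d) (k : ℤ) :
    circPascal d y0 (n + 1) k = circPascal d y0 n k + circPascal d y0 n (k - 1) := by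
  rw [circPascal_eq_T, circPascal_eq_T, circPascal_eq_T, ← Finset.sum_add_distrib]
  apply Finset.sum_congr rfl
  intro i _
  rw [T_succ d n hd, show k - 1 - (i:ℤ) = k - i - 1 by ring]

lemma cp_window (d y0 n : ℕ) (k : ℤ) :
    circPascal d y0 n (k + 1) + T d n (k - y0) =
      circPascal d y0 n k + T d n (k + 1) := by
  rw [circPascal_eq_T, circPascal_eq_T]
  have h1 : ∑ i ∈ Finset.range (y0 + 2), T d n (k + 1 - i)
      = (∑ i ∈ Finset.range (y0 + 1), T d n (k + 1 - i)) + T d n (k - y0) := by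
    rw [Finset.sum_range_succ]
    congr 2
    push_cast
    ring
  have h2 : ∑ i ∈ Finset.range (y0 + 2), T d n (k + 1 - i)
      = T d n (k + 1) + ∑ i ∈ Finset.range (y0 + 1), T d n (k - i) := by
    rw [Finset.sum_range_succ', add_comm]
    congr 1
    · norm_num
    · apply Finset.sum_congr rfl
      intro i _
      congr 1
      push_cast
      ring
  omega

lemma step (d y0 : ℕ) (hd : 2 ≤ d) (hy : y0 ≤ d - 2) :
    ∀ n : ℕ, ∀ k : ℤ, (n : ℤ) + y0 - d ≤ 2 * k + 1 → 2 * k + 1 ≤ (n : ℤ) + y0 →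
      circPascal d y0 n k ≤ circPascal d y0 n (k + 1) := by
  have hd1 : 1 ≤ d := by omega
  have hyz : (y0:ℤ) ≤ (d:ℤ) - 2 := by omega
  intro n
  induction n with
  | zero =>
    intro k h1 h2
    have hw := cp_window d y0 0 k
    have hT0 : T d 0 (k - y0) = 0 := by
      rw [T_zero d hd1, if_neg]
      rintro ⟨t, ht⟩
      have e2 : 2 * ((d:ℤ) * t) ≤ -(y0:ℤ) - 1 := by
        push_cast at h2
        linarith
      have e1 : -2 * (d:ℤ) + 1 ≤ 2 * ((d:ℤ) * t) := by
        push_cast at h1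
        linarith
      rcases lt_or_ge t 0 with ht0 | ht0
      · have h5 : (d:ℤ) * t ≤ (d:ℤ) * (-1) := by
          apply mul_le_mul_of_nonneg_left (by omega) (by positivity)
        linarith
      · have h5 : 0 ≤ (d:ℤ) * t := mul_nonneg (by positivity) ht0
        linarith
    omega
  | succ n ih =>
    intro k h1 h2
    push_cast at h1 h2
    rw [cp_succ d y0 n hd1, cp_succ d y0 n hd1, show k + 1 - 1 = k by ring]
    by_cases hc : 2 * k = (n : ℤ) + y0
    · have hswap : circPascal d y0 n (k + 1) = circPascal d y0 n (k - 1) := by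
        rw [← cp_symm d y0 n (k + 1), show (n:ℤ) + y0 - (k + 1) = k - 1 by omega]
      omega
    by_cases hc2 : 2 * k = (n : ℤ) + y0 - d
    · have hswap : circPascal d y0 n (k - 1) = circPascal d y0 n (k + 1) := by
        rw [← cp_symm d y0 n (k - 1), show (n:ℤ) + y0 - (k - 1) = (k + 1) + d * 1 by omega,
          cp_shift d y0 n hd1]
      omega
    · have i1 := ih k (by omega) (by omega)
      have i2 := ih (k - 1) (by omega) (by omega)
      rw [show k - 1 + 1 = k by ring] at i2
      omega

lemma chain (d y0 : ℕ) (hd : 2 ≤ d) (hy : y0 ≤ d - 2) (n : ℕ) :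
    ∀ t : ℕ, ∀ j : ℤ, (n : ℤ) + y0 - d ≤ 2 * j + 1 → 2 * (j + t) - 1 ≤ (n : ℤ) + y0 →
      circPascal d y0 n j ≤ circPascal d y0 n (j + t) := by
  intro t
  induction t with
  | zero => intro j _ _; simp
  | succ t ih =>
    intro j h1 h2
    push_cast at h2 ⊢
    have hstep := step d y0 hd hy n (j + t) (by omega) (by omega)
    calc circPascal d y0 n j ≤ circPascal d y0 n (j + t) := ih j h1 (by push_cast; omega)
      _ ≤ circPascal d y0 n (j + t + 1) := hstep
      _ = circPascal d y0 n (j + (t + 1)) := by rw [show j + (t:ℤ) + 1 = j + ((t:ℤ) + 1) by ring]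

end CPaux

open CPaux in
/-- `σ_{n,⌊(n+y₀)/2⌋}` is a maximum value of row `n` of the circular Pascal array of order
`d` with initial offset `y₀`. -/
theorem circPascal_le_max (d y0 : ℕ) (hd : 2 ≤ d) (hy : y0 ≤ d - 2) (n : ℕ) (k : ℤ) :
    circPascal d y0 n k ≤ circPascal d y0 n (((n + y0) / 2 : ℕ) : ℤ) := by
  have hd1 : 1 ≤ d := by omega
  set m : ℤ := (((n + y0) / 2 : ℕ) : ℤ) with hm
  have hm1 : 2 * m ≤ (n : ℤ) + y0 := by omega
  have hm2 : (n : ℤ) + y0 ≤ 2 * m + 1 := by omega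
  set A : ℤ := (n : ℤ) + y0 - d - 2 * k with hA
  set t : ℤ := A / (2 * d) + 1 with ht
  set j : ℤ := k + d * t with hj
  have hdpos : (0:ℤ) < 2 * d := by positivity
  have hmod := Int.emod_nonneg A (by omega : (2 * (d:ℤ)) ≠ 0)
  have hmod2 := Int.emod_lt_of_pos A hdpos
  have hdiv := Int.mul_ediv_add_emod A (2 * d)
  have hdt : 2 * ((d:ℤ) * t) = A - A % (2 * d) + 2 * d := by
    rw [ht]
    linear_combination hdiv
  have hrange1 : (n : ℤ) + y0 - d < 2 * j := by
    rw [hj]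
    linarith
  have hrange2 : 2 * j ≤ (n : ℤ) + y0 + d := by
    rw [hj]
    linarith
  have hper : circPascal d y0 n k = circPascal d y0 n j := by
    rw [hj, cp_shift d y0 n hd1]
  rw [hper]
  rcases le_or_gt j m with hjm | hjm
  · have hc := chain d y0 hd hy n (m - j).toNat j (by omega) (by push_cast; omega)
    rw [show j + ((m - j).toNat : ℤ) = m by omega] at hc
    exact hc
  · have hsym : circPascal d y0 n j = circPascal d y0 n ((n:ℤ) + y0 - j) := by
      rw [cp_symm]
    rw [hsym]
    set j' : ℤ := (n:ℤ) + y0 - j with hj'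
    have hc := chain d y0 hd hy n (m - j').toNat j' (by omega) (by push_cast; omega)
    rw [show j' + ((m - j').toNat : ℤ) = m by omega] at hc
    exact hc
end

section
/- Let s, t be integers with t ≥ 0 ≥ s, and let a, b be nonnegative integers with a + s ≤ b ≤ a + t. Set d = t − s + 2 and y₀ = −s. Then the number of K-M paths satisfies D(a,b;s,t) = σ_{a+b, b−s} − σ_{a+b, b−s+1}, where σ is the circular Pascal array of order d with initial offset y₀. -/
/-- Number of up-steps (`true` entries) among the first `j` steps of `f`. -/
def upCount {N : ℕ} (f : Fin N → Bool) (j : ℕ) : ℕ :=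
  (Finset.univ.filter (fun i : Fin N => (i : ℕ) < j ∧ f i = true)).card

/-- `D(a,b;s,t)`: the number of monotonic lattice paths (unit right / unit up steps) from
`(0,0)` to `(a,b)` all of whose lattice points `(x,y)` satisfy `x + s ≤ y ≤ x + t`.
A path of length `a+b` is encoded by `f : Fin (a+b) → Bool` (`true` = up step); after
`j` steps the path is at `(j − upCount f j, upCount f j)`. -/
noncomputable def KMCount (a b : ℕ) (s t : ℤ) : ℕ :=
  Nat.card {f : Fin (a + b) → Bool //
    upCount f (a + b) = b ∧
    ∀ j : ℕ, j ≤ a + b →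
      ((j : ℤ) - upCount f j) + s ≤ (upCount f j : ℤ) ∧
      (upCount f j : ℤ) ≤ ((j : ℤ) - upCount f j) + t}


lemma binomZ_pascal (n : ℕ) (x : ℤ) : binomZ (n+1) x = binomZ n x + binomZ n (x-1) := by
  unfold binomZ
  rcases lt_trichotomy x 0 with h | rfl | h
  · rw [if_neg (by omega), if_neg (by omega), if_neg (by omega)]
  · norm_num
  · rw [if_pos (by omega), if_pos (by omega), if_pos (by omega)]
    have hx : x.toNat = (x-1).toNat + 1 := by omega
    rw [hx, Nat.choose_succ_succ']
    omega

lemma binomZ_eq_zero_of (n : ℕ) (x : ℤ) (h : x < 0 ∨ (n:ℤ) < x) : binomZ n x = 0 := by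
  unfold binomZ
  rcases h with h | h
  · rw [if_neg (by omega)]
  · rw [if_pos (by omega)]
    exact Nat.choose_eq_zero_of_lt (by omega)

lemma binomZ_symm (n : ℕ) (x : ℤ) : binomZ n x = binomZ n ((n:ℤ) - x) := by
  by_cases h0 : 0 ≤ x
  · by_cases h1 : x ≤ (n:ℤ)
    · unfold binomZ
      rw [if_pos h0, if_pos (by omega)]
      have : ((n:ℤ) - x).toNat = n - x.toNat := by omega
      rw [this, Nat.choose_symm (by omega)]
    · rw [binomZ_eq_zero_of n x (by omega), binomZ_eq_zero_of n _ (by omega)]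
  · rw [binomZ_eq_zero_of n x (by omega), binomZ_eq_zero_of n _ (by omega)]

lemma binomZ_zero (x : ℤ) (h : x ≠ 0) : binomZ 0 x = 0 := by
  rcases lt_or_ge x 0 with h' | h'
  · exact binomZ_eq_zero_of 0 x (Or.inl h')
  · exact binomZ_eq_zero_of 0 x (Or.inr (by omega))

noncomputable def Tf (d n : ℕ) (m : ℤ) : ℕ := ∑ᶠ j : ℤ, binomZ n (m + d * j)

lemma Tf_support_finite (d n : ℕ) (hd : 1 ≤ d) (m : ℤ) :
    (Function.support fun j : ℤ => binomZ n (m + d * j)).Finite := by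
  apply Set.Finite.subset (Set.finite_Icc (-(|m| + n)) (|m| + n))
  intro j hj
  simp only [Function.mem_support] at hj
  have h1 : 0 ≤ m + d * j ∧ m + d * j ≤ n := by
    by_contra hc
    push_neg at hc
    rcases le_or_gt 0 (m + d * j) with h | h
    · exact hj (binomZ_eq_zero_of _ _ (Or.inr (hc h)))
    · exact hj (binomZ_eq_zero_of _ _ (Or.inl h))
  have hdj : |(d:ℤ) * j| ≤ |m| + n := by
    rw [abs_le]; constructor <;> [skip; skip] <;> cases' abs_cases m with hm hm <;> omega
  have hj' : |j| ≤ |(d:ℤ) * j| := by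
    rw [abs_mul]
    calc |j| = 1 * |j| := (one_mul _).symm
    _ ≤ |(d:ℤ)| * |j| := by
        apply mul_le_mul_of_nonneg_right _ (abs_nonneg j)
        rw [abs_of_nonneg (by positivity)]; exact_mod_cast hd
  simp only [Set.mem_Icc]
  cases' abs_cases j with h h <;> omega

lemma Tf_pascal (d n : ℕ) (hd : 1 ≤ d) (m : ℤ) :
    Tf d (n+1) m = Tf d n m + Tf d n (m-1) := by
  unfold Tf
  have h1 : (∑ᶠ j : ℤ, binomZ (n+1) (m + d * j))
      = ∑ᶠ j : ℤ, (binomZ n (m + d * j) + binomZ n ((m-1) + d * j)) := by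
    apply finsum_congr
    intro j
    rw [binomZ_pascal]
    congr 1
    ring_nf
  rw [h1, finsum_add_distrib (Tf_support_finite d n hd m) (Tf_support_finite d n hd (m-1))]

lemma Tf_symm (d n : ℕ) (hd : 1 ≤ d) (m : ℤ) : Tf d n m = Tf d n ((n:ℤ) - m) := by
  unfold Tf
  have h1 : (∑ᶠ j : ℤ, binomZ n (m + d * j))
      = ∑ᶠ j : ℤ, binomZ n (((n:ℤ) - m) + d * ((Equiv.neg ℤ) j)) := by
    apply finsum_congr
    intro j
    rw [binomZ_symm n (m + d * j)]
    congr 1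
    simp [Equiv.neg]
    ring
  exact h1.trans (finsum_comp_equiv (Equiv.neg ℤ) (f := fun j => binomZ n (((n:ℤ) - m) + d * j)))

lemma Tf_period (d n : ℕ) (m : ℤ) : Tf d n (m + d) = Tf d n m := by
  unfold Tf
  have h1 : (∑ᶠ j : ℤ, binomZ n ((m + d) + d * j))
      = ∑ᶠ j : ℤ, binomZ n (m + d * ((Equiv.addRight (1:ℤ)) j)) := by
    apply finsum_congr
    intro j
    congr 1
    simp [Equiv.addRight]
    ring
  exact h1.trans (finsum_comp_equiv (Equiv.addRight (1:ℤ)) (f := fun j => binomZ n (m + d * j)))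

lemma Tf_zero_zero (d : ℕ) (hd : 1 ≤ d) : Tf d 0 0 = 1 := by
  unfold Tf
  rw [finsum_eq_single _ (0:ℤ)]
  · norm_num [binomZ]
  · intro j hj
    apply binomZ_zero
    simp only [zero_add]
    intro hc
    rcases mul_eq_zero.1 hc with h | h
    · omega
    · exact hj h

lemma Tf_zero_ne (d : ℕ) (m : ℤ) (h : ¬ (d:ℤ) ∣ m) : Tf d 0 m = 0 := by
  unfold Tf
  apply finsum_eq_zero_of_forall_eq_zero
  intro j
  apply binomZ_zero
  intro hc
  exact h ⟨-j, by linarith⟩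

lemma upCount_eq_sum {N : ℕ} (f : Fin N → Bool) (j : ℕ) :
    upCount f j = ∑ i : Fin N, if ((i : ℕ) < j ∧ f i = true) then 1 else 0 := by
  rw [upCount, Finset.card_filter]

lemma upCount_snoc_of_le {n : ℕ} (g : Fin n → Bool) (x : Bool) {j : ℕ} (hj : j ≤ n) :
    upCount (Fin.snoc g x) j = upCount g j := by
  rw [upCount_eq_sum, upCount_eq_sum, Fin.sum_univ_castSucc]
  have hlast : ¬ ((Fin.last n : ℕ) < j) := by simp [Fin.last]; omega
  rw [if_neg (by tauto)]
  simp only [Fin.snoc_castSucc, Fin.coe_castSucc, add_zero]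

lemma upCount_snoc_succ {n : ℕ} (g : Fin n → Bool) (x : Bool) :
    upCount (Fin.snoc g x) (n+1) = upCount g n + (if x = true then 1 else 0) := by
  rw [upCount_eq_sum, upCount_eq_sum, Fin.sum_univ_castSucc]
  congr 1
  · apply Finset.sum_congr rfl
    intro i _
    simp only [Fin.snoc_castSucc, Fin.coe_castSucc]
    have h1 : (i : ℕ) < n + 1 := by omega
    have h2 : (i : ℕ) < n := i.isLt
    simp [h1, h2]
  · rw [Fin.snoc_last]
    simp [Fin.last]

def band (s t : ℤ) (j u : ℕ) : Prop :=
  ((j : ℤ) - u) + s ≤ (u : ℤ) ∧ (u : ℤ) ≤ ((j : ℤ) - u) + t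

noncomputable def cnt (s t : ℤ) (n k : ℕ) : ℕ :=
  Nat.card {f : Fin n → Bool //
    upCount f n = k ∧ ∀ j : ℕ, j ≤ n →
      ((j : ℤ) - upCount f j) + s ≤ (upCount f j : ℤ) ∧
      (upCount f j : ℤ) ≤ ((j : ℤ) - upCount f j) + t}

lemma cnt_eq_band (s t : ℤ) (n k : ℕ) :
    cnt s t n k = Nat.card {f : Fin n → Bool //
      upCount f n = k ∧ ∀ j : ℕ, j ≤ n → band s t j (upCount f j)} := rfl

lemma cnt_of_not_band {s t : ℤ} {n k : ℕ} (h : ¬ band s t n k) : cnt s t n k = 0 := by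
  rw [cnt_eq_band]
  have : IsEmpty {f : Fin n → Bool //
      upCount f n = k ∧ ∀ j : ℕ, j ≤ n → band s t j (upCount f j)} := by
    constructor
    rintro ⟨f, h1, h2⟩
    exact h (h1 ▸ h2 n le_rfl)
  exact Nat.card_of_isEmpty

lemma upCount_zero {N : ℕ} (f : Fin N → Bool) : upCount f 0 = 0 := by
  simp [upCount]

lemma cnt_zero_zero (s t : ℤ) (hs : s ≤ 0) (ht : 0 ≤ t) : cnt s t 0 0 = 1 := by
  rw [cnt_eq_band]
  have h : ∀ f : Fin 0 → Bool,
      upCount f 0 = 0 ∧ ∀ j : ℕ, j ≤ 0 → band s t j (upCount f j) := by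
    intro f
    refine ⟨upCount_zero f, ?_⟩
    intro j hj
    interval_cases j
    rw [upCount_zero f]
    constructor <;> simp <;> omega
  rw [Nat.card_congr (Equiv.subtypeUnivEquiv h)]
  simp [Nat.card_eq_fintype_card]

lemma cnt_zero_ne (s t : ℤ) (k : ℕ) (hk : k ≠ 0) : cnt s t 0 k = 0 := by
  rw [cnt_eq_band]
  have : IsEmpty {f : Fin 0 → Bool //
      upCount f 0 = k ∧ ∀ j : ℕ, j ≤ 0 → band s t j (upCount f j)} := by
    constructor
    rintro ⟨f, h1, -⟩
    rw [upCount_zero f] at h1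
    exact hk h1.symm
  exact Nat.card_of_isEmpty

/-- equiv of pairs with snoc -/
def snocE (n : ℕ) : ((Fin n → Bool) × Bool) ≃ (Fin (n+1) → Bool) where
  toFun p := Fin.snoc p.1 p.2
  invFun f := (Fin.init f, f (Fin.last n))
  left_inv p := by simp [Fin.init_snoc, Fin.snoc_last]
  right_inv f := by simp [Fin.snoc_init_self]

lemma natCard_prod_bool {A : Type} [Finite A] (Q : A → Bool → Prop) :
    Nat.card {p : A × Bool // Q p.1 p.2}
      = Nat.card {a : A // Q a false} + Nat.card {a : A // Q a true} := by
  have e : {p : A × Bool // Q p.1 p.2} ≃ {a : A // Q a false} ⊕ {a : A // Q a true} :=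
    { toFun := fun x => match x with
        | ⟨(a, false), h⟩ => Sum.inl ⟨a, h⟩
        | ⟨(a, true), h⟩ => Sum.inr ⟨a, h⟩
      invFun := fun x => match x with
        | Sum.inl ⟨a, h⟩ => ⟨(a, false), h⟩
        | Sum.inr ⟨a, h⟩ => ⟨(a, true), h⟩
      left_inv := by rintro ⟨⟨a, (_|_)⟩, h⟩ <;> rfl
      right_inv := by rintro (⟨a, h⟩ | ⟨a, h⟩) <;> rfl }
  rw [Nat.card_congr e, Nat.card_sum]

lemma snoc_prop_iff (s t : ℤ) (n k : ℕ) (hb : band s t (n+1) k)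
    (g : Fin n → Bool) (x : Bool) :
    (upCount (Fin.snoc g x) (n+1) = k ∧
      ∀ j : ℕ, j ≤ n+1 → band s t j (upCount (Fin.snoc g x) j))
    ↔ (upCount g n + (if x = true then 1 else 0) = k ∧
      ∀ j : ℕ, j ≤ n → band s t j (upCount g j)) := by
  constructor
  · rintro ⟨h1, h2⟩
    refine ⟨by rw [← upCount_snoc_succ g x]; exact h1, ?_⟩
    intro j hj
    rw [← upCount_snoc_of_le g x hj]
    exact h2 j (by omega)
  · rintro ⟨h1, h2⟩
    refine ⟨by rw [upCount_snoc_succ g x]; exact h1, ?_⟩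
    intro j hj
    rcases Nat.eq_or_lt_of_le hj with rfl | hj'
    · rw [upCount_snoc_succ g x, h1]
      exact hb
    · have hj'' : j ≤ n := by omega
      rw [upCount_snoc_of_le g x hj'']
      exact h2 j hj''

lemma cnt_equiv_pair (s t : ℤ) (n k : ℕ) :
    cnt s t (n+1) k
      = Nat.card {p : (Fin n → Bool) × Bool //
        upCount (Fin.snoc p.1 p.2) (n+1) = k ∧
        ∀ j : ℕ, j ≤ n+1 → band s t j (upCount (Fin.snoc p.1 p.2) j)} := by
  rw [cnt_eq_band]
  apply Nat.card_congr
  exact (Equiv.subtypeEquiv (snocE n).symm (by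
      intro f
      constructor
      · intro h
        simpa [snocE, Fin.snoc_init_self] using h
      · intro h
        simpa [snocE, Fin.snoc_init_self] using h))

lemma cnt_succ_false (s t : ℤ) (n k : ℕ) (hb : band s t (n+1) k) :
    Nat.card {g : Fin n → Bool //
        upCount (Fin.snoc g false) (n+1) = k ∧
        ∀ j : ℕ, j ≤ n+1 → band s t j (upCount (Fin.snoc g false) j)}
      = cnt s t n k := by
  rw [cnt_eq_band]
  apply Nat.card_congr
  apply Equiv.subtypeEquivRight
  intro g
  rw [snoc_prop_iff s t n k hb g false]
  simp

lemma cnt_succ_zero (s t : ℤ) (n : ℕ) (hb : band s t (n+1) 0) :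
    cnt s t (n+1) 0 = cnt s t n 0 := by
  rw [cnt_equiv_pair,
    natCard_prod_bool (fun g x =>
      upCount (Fin.snoc g x) (n+1) = 0 ∧
      ∀ j : ℕ, j ≤ n+1 → band s t j (upCount (Fin.snoc g x) j)),
    cnt_succ_false s t n 0 hb]
  have : IsEmpty {g : Fin n → Bool //
      upCount (Fin.snoc g true) (n+1) = 0 ∧
      ∀ j : ℕ, j ≤ n+1 → band s t j (upCount (Fin.snoc g true) j)} := by
    constructor
    rintro ⟨g, hg⟩
    have h1 := ((snoc_prop_iff s t n 0 hb g true).1 hg).1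
    revert h1
    simp
  rw [Nat.card_of_isEmpty]
  simp

lemma cnt_succ_pos (s t : ℤ) (n m : ℕ) (hb : band s t (n+1) (m+1)) :
    cnt s t (n+1) (m+1) = cnt s t n (m+1) + cnt s t n m := by
  rw [cnt_equiv_pair,
    natCard_prod_bool (fun g x =>
      upCount (Fin.snoc g x) (n+1) = m+1 ∧
      ∀ j : ℕ, j ≤ n+1 → band s t j (upCount (Fin.snoc g x) j)),
    cnt_succ_false s t n (m+1) hb]
  congr 1
  rw [cnt_eq_band]
  apply Nat.card_congr
  apply Equiv.subtypeEquivRight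
  intro g
  rw [snoc_prop_iff s t n (m+1) hb g true]
  simp

lemma not_dvd_small (d : ℕ) (m : ℤ) (hne : m ≠ 0) (hlow : -(d:ℤ) < m) (hhigh : m < d) :
    ¬ (d:ℤ) ∣ m := by
  intro hdvd
  rcases lt_trichotomy m 0 with h | h | h
  · have := Int.le_of_dvd (by omega) ((dvd_neg).2 hdvd)
    omega
  · exact hne h
  · have := Int.le_of_dvd h hdvd
    omega

noncomputable def Nz (s t : ℤ) (n : ℕ) (k : ℤ) : ℕ :=
  if 0 ≤ k then cnt s t n k.toNat else 0

lemma main_induction (s t : ℤ) (hs : s ≤ 0) (ht : 0 ≤ t) (d : ℕ) (hd : (d:ℤ) = t - s + 2) :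
    ∀ n : ℕ, ∀ k : ℤ, s - 1 ≤ 2*k - n → 2*k - n ≤ t + 1 →
    (Nz s t n k : ℤ) = (Tf d n k : ℤ) - (Tf d n (k - s + 1) : ℤ) := by
  have hd1 : 1 ≤ d := by omega
  intro n
  induction n with
  | zero =>
    intro k h1 h2
    simp only [Nat.cast_zero, sub_zero] at h1 h2
    by_cases hk : k = 0
    · subst hk
      have hL : Nz s t 0 0 = 1 := by
        rw [Nz, if_pos le_rfl]
        simpa using cnt_zero_zero s t hs ht
      rw [hL, Tf_zero_zero d hd1,
        Tf_zero_ne d _ (not_dvd_small d (0 - s + 1) (by omega) (by omega) (by omega))]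
      norm_num
    · have hL : Nz s t 0 k = 0 := by
        rw [Nz]
        by_cases h0 : 0 ≤ k
        · rw [if_pos h0]
          exact cnt_zero_ne s t k.toNat (by omega)
        · rw [if_neg h0]
      rw [hL,
        Tf_zero_ne d _ (not_dvd_small d k hk (by omega) (by omega)),
        Tf_zero_ne d _ (not_dvd_small d (k - s + 1) (by omega) (by omega) (by omega))]
      norm_num
  | succ n ih =>
    intro k h1 h2
    have hcast : ((n+1 : ℕ) : ℤ) = (n:ℤ) + 1 := by push_cast; ring
    rcases eq_or_lt_of_le h2 with hup | h2' 
    · -- 2k - (n+1) = t + 1 : upper boundary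
      have hup' : 2*k - ((n:ℤ)+1) = t + 1 := by rw [← hcast]; omega
      have hL : Nz s t (n+1) k = 0 := by
        rw [Nz]
        have h0 : 0 ≤ k := by omega
        rw [if_pos h0]
        apply cnt_of_not_band
        rw [band]
        push_cast
        omega
      have hR : Tf d (n+1) (k - s + 1) = Tf d (n+1) k := by
        have e1 : k - s + 1 = (((n+1:ℕ):ℤ) - k) + d := by rw [hcast]; omega
        rw [e1, Tf_period d (n+1) _, ← Tf_symm d (n+1) hd1 k]
      rw [hL, hR]
      norm_num
    · rcases eq_or_lt_of_le h1 with hlo | h1'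
      · -- 2k - (n+1) = s - 1 : lower boundary
        have hlo' : 2*k - ((n:ℤ)+1) = s - 1 := by rw [← hcast]; omega
        have hL : Nz s t (n+1) k = 0 := by
          rw [Nz]
          by_cases h0 : 0 ≤ k
          · rw [if_pos h0]
            apply cnt_of_not_band
            rw [band]
            push_cast
            omega
          · rw [if_neg h0]
        have hR : Tf d (n+1) (k - s + 1) = Tf d (n+1) k := by
          have e1 : k - s + 1 = ((n+1:ℕ):ℤ) - k := by rw [hcast]; omega
          rw [e1, ← Tf_symm d (n+1) hd1 k]
        rw [hL, hR]
        norm_num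
      · -- interior : s ≤ 2k - (n+1) ≤ t
        have hin1 : s ≤ 2*k - ((n:ℤ)+1) := by rw [← hcast]; omega
        have hin2 : 2*k - ((n:ℤ)+1) ≤ t := by rw [← hcast]; omega
        have ihk := ih k (by omega) (by omega)
        have ihk1 := ih (k-1) (by omega) (by omega)
        have hR : (Tf d (n+1) k : ℤ) - (Tf d (n+1) (k - s + 1) : ℤ)
            = ((Tf d n k : ℤ) - Tf d n (k - s + 1))
              + ((Tf d n (k-1) : ℤ) - Tf d n ((k-1) - s + 1)) := by
          rw [Tf_pascal d n hd1 k, Tf_pascal d n hd1 (k - s + 1)]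
          have e2 : k - s + 1 - 1 = (k-1) - s + 1 := by ring
          rw [e2]
          push_cast
          ring
        rw [hR, ← ihk, ← ihk1]
        -- now show Nz (n+1) k = Nz n k + Nz n (k-1)
        rcases lt_trichotomy k 0 with hk | hk | hk
        · rw [Nz, Nz, Nz, if_neg (by omega), if_neg (by omega), if_neg (by omega)]
          norm_num
        · subst hk
          have hb : band s t (n+1) 0 := by
            rw [band]
            push_cast
            omega
          rw [Nz, Nz, Nz, if_pos le_rfl, if_pos le_rfl, if_neg (by omega)]
          simp only [Int.toNat_zero]
          rw [cnt_succ_zero s t n hb]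
          norm_num
        · obtain ⟨m, rfl⟩ : ∃ m : ℕ, k = (m:ℤ) + 1 := ⟨(k-1).toNat, by omega⟩
          have hb : band s t (n+1) (m+1) := by
            rw [band]
            push_cast
            push_cast at hin1 hin2
            omega
          rw [Nz, Nz, Nz, if_pos (by omega), if_pos (by omega), if_pos (by omega)]
          have e3 : ((m:ℤ) + 1).toNat = m + 1 := by omega
          have e4 : ((m:ℤ) + 1 - 1).toNat = m := by omega
          rw [e3, e4, cnt_succ_pos s t n m hb]
          push_cast
          ring

lemma circPascal_eq_sum_Tf (d y0 n : ℕ) (k : ℤ) :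
    circPascal d y0 n k = ∑ i ∈ Finset.range (y0 + 1), Tf d n (k - i) := rfl

lemma circ_diff (d y0 n : ℕ) (k : ℤ) :
    (circPascal d y0 n k : ℤ) - (circPascal d y0 n (k+1) : ℤ)
      = (Tf d n (k - y0) : ℤ) - (Tf d n (k+1) : ℤ) := by
  rw [circPascal_eq_sum_Tf, circPascal_eq_sum_Tf,
    Finset.sum_range_succ (fun i => Tf d n (k - i)) y0,
    Finset.sum_range_succ' (fun i => Tf d n (k + 1 - i)) y0]
  have hC : (∑ i ∈ Finset.range y0, Tf d n (k + 1 - ((i+1 : ℕ) : ℤ)))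
      = ∑ i ∈ Finset.range y0, Tf d n (k - i) := by
    apply Finset.sum_congr rfl
    intro i _
    congr 1
    push_cast
    ring
  rw [hC]
  have h0 : k + 1 - ((0:ℕ):ℤ) = k + 1 := by push_cast; ring
  rw [h0]
  push_cast
  ring

/-- With `d = t−s+2` and `y₀ = −s`, the K-M path count satisfies
`D(a,b;s,t) = σ_{a+b, b−s} − σ_{a+b, b−s+1}` in the circular Pascal array of order `d`
with initial offset `y₀`. -/
theorem KM_eq_circPascal_diff (s t : ℤ) (hs : s ≤ 0) (ht : 0 ≤ t) (a b : ℕ)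
    (h1 : (a : ℤ) + s ≤ (b : ℤ)) (h2 : (b : ℤ) ≤ (a : ℤ) + t)
    (d y0 : ℕ) (hd : (d : ℤ) = t - s + 2) (hy : (y0 : ℤ) = -s) :
    (KMCount a b s t : ℤ) =
      (circPascal d y0 (a + b) ((b : ℤ) - s) : ℤ) -
      (circPascal d y0 (a + b) ((b : ℤ) - s + 1) : ℤ) := by
  have hd1 : 1 ≤ d := by omega
  have hKM : KMCount a b s t = cnt s t (a+b) b := rfl
  have hmain := main_induction s t hs ht d hd (a+b) (b:ℤ)
    (by push_cast; omega) (by push_cast; omega)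
  have hNz : Nz s t (a+b) (b:ℤ) = KMCount a b s t := by
    rw [Nz, if_pos (Int.natCast_nonneg b), Int.toNat_natCast, hKM]
  have hcd := circ_diff d y0 (a+b) ((b:ℤ) - s)
  have e1 : (b:ℤ) - s - (y0:ℤ) = (b:ℤ) := by rw [hy]; ring
  rw [e1] at hcd
  rw [hcd, ← hNz]
  exact hmain
end

section
/- Fix an integer d ≥ 2 and let p be the up-sampled trinomial circular array of order d. For every n ≥ 0, the three-choice corridor number c'_n satisfies c'_n = p_{n,n} − p_{n,n+d}. -/
/-- Up-sampled trinomial circular array of order `d`: row 0 is the indicator of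
`k ≡ 0` or `1 (mod 2d)`, and `p_{n+1,k} = p_{n,k} + p_{n,k−1} + p_{n,k−2}`. -/
def trinomP (d : ℕ) : ℕ → ℤ → ℕ
  | 0, k => if (2 * (d : ℤ)) ∣ k ∨ (2 * (d : ℤ)) ∣ (k - 1) then 1 else 0
  | n + 1, k => trinomP d n k + trinomP d n (k - 1) + trinomP d n (k - 2)

/-- Three-choice corridor number: the number of sequences in `{−1,0,+1}` of length `n`
whose partial sums, shifted by the starting height `1`, stay in `{1,…,d−1}`. -/
noncomputable def motzkinCount (d n : ℕ) : ℕ :=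
  Nat.card {r : Fin n → ℤ // (∀ i, r i = -1 ∨ r i = 0 ∨ r i = 1) ∧
    ∀ j : Fin n, 1 ≤ 1 + ∑ i ∈ Finset.Iic j, r i ∧
      1 + ∑ i ∈ Finset.Iic j, r i ≤ (d : ℤ) - 1}

/-!
Write `F_n(h) = p_{n,n+h} - p_{n,n+d+h}` and `G_n(a) = F_n(1) + ⋯ + F_n(a)`. The array `p` is
`2d`-periodic in `k` and invariant under `k ↦ 2n + 1 - k`, so `F_n(1 - h) = F_n(h)` and
`F_n(h + d) = -F_n(h)`; pairing `m` with `d + 1 - m` then gives `G_n(d) = 0`, while `G_n(0) = 0`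
trivially. `F` inherits the trinomial recurrence in `n`, and because `F_n(0) = F_n(1)` so does
`G_n(a)` for `a ≥ 1`. Finally `G_0 = 1` on `{1, …, d - 1}`. These are the initial values, boundary
conditions and recurrence of the number of walks with steps in `{-1, 0, 1}` that start at height
`a` and stay in `{1, …, d - 1}`, so that number is `G_n(a)`, and `c'_n = G_n(1) = F_n(1) = F_n(0)`.
-/

open Finset

lemma sum_neg_one_zero_one {M : Type*} [AddCommMonoid M] (f : ℤ → M) :
    ∑ x ∈ ({-1, 0, 1} : Finset ℤ), f x = f (-1) + f 0 + f 1 := by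
  rw [sum_insert (by decide), sum_insert (by decide), sum_singleton, add_assoc]

lemma sum_Icc_one_add_one {M : Type*} [AddCommMonoid M] (f : ℤ → M) {b : ℤ} (hb : 0 ≤ b) :
    ∑ m ∈ Icc 1 (b + 1), f m = ∑ m ∈ Icc 1 b, f m + f (b + 1) := by
  rw [← insert_Icc_right_eq_Icc_add_one (by omega), sum_insert (by simp), add_comm]

lemma sum_Icc_one_add_neighbours {M : Type*} [AddCommMonoid M] {f : ℤ → M} (hf : f 0 = f 1)
    {a : ℤ} (ha : 1 ≤ a) :
    ∑ m ∈ Icc 1 a, (f (m - 1) + f m + f (m + 1)) =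
      ∑ m ∈ Icc 1 (a - 1), f m + ∑ m ∈ Icc 1 a, f m + ∑ m ∈ Icc 1 (a + 1), f m := by
  induction a, ha using Int.leInduction with
  | base => rw [sum_Icc_one_add_one f zero_le_one]; simp [hf, add_assoc]
  | succ a ha ih =>
    have ha' : ∑ m ∈ Icc 1 a, f m = ∑ m ∈ Icc 1 (a - 1), f m + f a := by
      simpa using sum_Icc_one_add_one f (b := a - 1) (by omega)
    rw [sum_Icc_one_add_one _ (by omega), ih, add_sub_cancel_right,
      sum_Icc_one_add_one f (by omega : 0 ≤ a + 1), sum_Icc_one_add_one f (by omega : 0 ≤ a), ha']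
    abel

lemma sum_Icc_one_eq_zero_of_antiperiodic {G : Type*} [AddCommGroup G] [IsAddTorsionFree G]
    {f : ℤ → G} {c : ℤ} (hf : ∀ h, f (1 - h) = f h) (hc : Function.Antiperiodic f c) :
    ∑ m ∈ Icc 1 c, f m = 0 := by
  have reflect : ∑ m ∈ Icc 1 c, f m = ∑ m ∈ Icc 1 c, -f m :=
    sum_nbij' (fun m ↦ c + 1 - m) (fun m ↦ c + 1 - m)
      (fun m hm ↦ by rw [mem_Icc] at hm ⊢; omega) (fun m hm ↦ by rw [mem_Icc] at hm ⊢; omega)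
      (by simp) (by simp) fun m _ ↦ by rw [show c + 1 - m = 1 - m + c by ring, hc, hf, neg_neg]
  rwa [sum_neg_distrib, self_eq_neg] at reflect

lemma Fin.sum_Iic_zero_cons {M : Type*} [AddCommMonoid M] {n : ℕ} (x : M) (s : Fin n → M) :
    ∑ i ∈ Iic (0 : Fin (n + 1)), (Fin.cons x s : Fin (n + 1) → M) i = x := by
  rw [← bot_eq_zero, Iic_bot, sum_singleton, bot_eq_zero, Fin.cons_zero]

lemma Fin.sum_Iic_succ_cons {M : Type*} [AddCommMonoid M] {n : ℕ} (x : M) (s : Fin n → M)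
    (j : Fin n) :
    ∑ i ∈ Iic j.succ, (Fin.cons x s : Fin (n + 1) → M) i = x + ∑ i ∈ Iic j, s i := by
  rw [Iic_eq_Icc, Icc_eq_cons_Ioc bot_le, Finset.sum_cons, bot_eq_zero, ← Fin.map_succEmb_Iic,
    sum_map]
  simp

lemma trinomP_periodic (d n : ℕ) : Function.Periodic (trinomP d n) (2 * d) := by
  induction n with
  | zero => intro k; simp [trinomP, add_sub_right_comm]
  | succ n ih =>
    intro k
    simp only [trinomP, add_sub_right_comm _ (2 * (d : ℤ)), ih k, ih (k - 1), ih (k - 2)]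

lemma trinomP_two_mul_add_one_sub (d n : ℕ) (k : ℤ) :
    trinomP d n (2 * n + 1 - k) = trinomP d n k := by
  induction n generalizing k with
  | zero => simp [trinomP, dvd_sub_comm, or_comm]
  | succ n ih =>
    rw [show 2 * ((n + 1 : ℕ) : ℤ) + 1 - k = 2 * n + 1 - (k - 2) by push_cast; ring, trinomP,
      show 2 * (n : ℤ) + 1 - (k - 2) - 1 = 2 * n + 1 - (k - 1) by ring,
      show 2 * (n : ℤ) + 1 - (k - 2) - 2 = 2 * n + 1 - k by ring, ih, ih, ih, trinomP]
    ring

lemma trinomP_zero_one (d : ℕ) : trinomP d 0 1 = 1 := by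
  simp [trinomP]

lemma trinomP_zero_of_one_lt_of_lt {d : ℕ} {k : ℤ} (h₁ : 1 < k) (h₂ : k < 2 * d) :
    trinomP d 0 k = 0 := by
  rw [trinomP, if_neg]
  rintro (h | h)
  · have := Int.le_of_dvd (by omega) h; omega
  · have := Int.le_of_dvd (by omega) h; omega

def trinomDiff (d n : ℕ) (h : ℤ) : ℤ := trinomP d n (n + h) - trinomP d n (n + d + h)

lemma trinomDiff_one_sub (d n : ℕ) (h : ℤ) : trinomDiff d n (1 - h) = trinomDiff d n h := by
  have h₁ : trinomP d n (n + (1 - h)) = trinomP d n (n + h) := by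
    rw [← trinomP_two_mul_add_one_sub d n (n + h)]; congr 1; ring
  have h₂ : trinomP d n (n + d + (1 - h)) = trinomP d n (n + d + h) :=
    calc trinomP d n (n + d + (1 - h)) = trinomP d n (2 * n + 1 - (n - d + h)) := by ring_nf
      _ = trinomP d n (n - d + h + 2 * d) := by
        rw [trinomP_two_mul_add_one_sub, trinomP_periodic]
      _ = trinomP d n (n + d + h) := by ring_nf
  rw [trinomDiff, trinomDiff, h₁, h₂]

lemma trinomDiff_antiperiodic (d n : ℕ) : Function.Antiperiodic (trinomDiff d n) d := by
  intro h
  rw [trinomDiff, trinomDiff, show (n : ℤ) + d + (h + d) = n + h + 2 * d by ring,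
    trinomP_periodic]
  ring_nf

lemma trinomDiff_succ (d n : ℕ) (h : ℤ) :
    trinomDiff d (n + 1) h =
      trinomDiff d n (h - 1) + trinomDiff d n h + trinomDiff d n (h + 1) := by
  simp only [trinomDiff, trinomP]
  push_cast
  ring_nf

lemma trinomDiff_zero_of_mem {d : ℕ} {m : ℤ} (hm : m ∈ Set.Icc 1 ((d : ℤ) - 1)) :
    trinomDiff d 0 m = if m = 1 then 1 else 0 := by
  obtain ⟨hm₁, hm₂⟩ := hm
  have hd : trinomP d 0 (d + m) = 0 := trinomP_zero_of_one_lt_of_lt (by omega) (by omega)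
  split_ifs with h
  · subst h; simp [trinomDiff, hd, trinomP_zero_one]
  · simp [trinomDiff, hd, trinomP_zero_of_one_lt_of_lt (d := d) (by omega : 1 < m) (by omega)]

noncomputable def trinomCumDiff (d n : ℕ) (a : ℤ) : ℤ := ∑ m ∈ Icc 1 a, trinomDiff d n m

lemma trinomCumDiff_zero_of_mem {d : ℕ} {a : ℤ} (ha : a ∈ Set.Icc 1 ((d : ℤ) - 1)) :
    trinomCumDiff d 0 a = 1 := by
  rw [trinomCumDiff, sum_congr rfl fun m hm ↦ trinomDiff_zero_of_mem (d := d)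
    ⟨(mem_Icc.1 hm).1, (mem_Icc.1 hm).2.trans ha.2⟩, sum_ite_eq']
  simp [ha.1]

lemma trinomCumDiff_of_nonpos (d n : ℕ) {a : ℤ} (ha : a ≤ 0) : trinomCumDiff d n a = 0 := by
  rw [trinomCumDiff, Icc_eq_empty (by omega), sum_empty]

lemma trinomCumDiff_self (d n : ℕ) : trinomCumDiff d n d = 0 :=
  sum_Icc_one_eq_zero_of_antiperiodic (trinomDiff_one_sub d n) (trinomDiff_antiperiodic d n)

lemma trinomCumDiff_succ (d n : ℕ) {a : ℤ} (ha : 1 ≤ a) :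
    trinomCumDiff d (n + 1) a =
      trinomCumDiff d n (a - 1) + trinomCumDiff d n a + trinomCumDiff d n (a + 1) := by
  have h₀₁ : trinomDiff d n 0 = trinomDiff d n 1 := by simpa using trinomDiff_one_sub d n 1
  simp only [trinomCumDiff, trinomDiff_succ]
  exact sum_Icc_one_add_neighbours h₀₁ ha

-- Phrased with `Set` membership so that `motzkinCount d n` is `corridorWalkCount d n 1` by `rfl`.
def IsCorridorWalk (d : ℕ) (a : ℤ) {n : ℕ} (r : Fin n → ℤ) : Prop :=
  (∀ i, r i ∈ ({-1, 0, 1} : Set ℤ)) ∧ ∀ j, a + ∑ i ∈ Iic j, r i ∈ Set.Icc 1 ((d : ℤ) - 1)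

noncomputable def corridorWalkCount (d n : ℕ) (a : ℤ) : ℕ :=
  Nat.card {r : Fin n → ℤ // IsCorridorWalk d a r}

instance (d n : ℕ) (a : ℤ) : Finite {r : Fin n → ℤ // IsCorridorWalk d a r} :=
  Set.Finite.to_subtype <| (Set.Finite.pi fun _ ↦ Set.toFinite ({-1, 0, 1} : Set ℤ)).subset
    fun _ hr i _ ↦ hr.1 i

lemma isCorridorWalk_cons_iff {d n : ℕ} {a x : ℤ} {s : Fin n → ℤ} :
    IsCorridorWalk d a (Fin.cons x s : Fin (n + 1) → ℤ) ↔
      x ∈ ({-1, 0, 1} : Set ℤ) ∧ a + x ∈ Set.Icc 1 ((d : ℤ) - 1) ∧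
        IsCorridorWalk d (a + x) s := by
  simp only [IsCorridorWalk, Fin.forall_fin_succ, Fin.cons_zero, Fin.cons_succ,
    Fin.sum_Iic_zero_cons, Fin.sum_Iic_succ_cons, add_assoc]
  tauto

noncomputable def IsCorridorWalk.consEquiv (d n : ℕ) (a : ℤ) :
    {r : Fin (n + 1) → ℤ // IsCorridorWalk d a r} ≃
      Σ x : ({-1, 0, 1} : Finset ℤ),
        {s : Fin n → ℤ // IsCorridorWalk d a (Fin.cons (x : ℤ) s)} where
  toFun r := ⟨⟨r.1 0, by simpa using r.2.1 0⟩,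
    ⟨Fin.tail r.1, by rw [Fin.cons_self_tail]; exact r.2⟩⟩
  invFun p := ⟨Fin.cons (p.1 : ℤ) p.2.1, p.2.2⟩
  left_inv r := Subtype.ext (Fin.cons_self_tail r.1)
  right_inv _ := Sigma.subtype_ext rfl rfl

lemma corridorWalkCount_zero (d : ℕ) (a : ℤ) : corridorWalkCount d 0 a = 1 := by
  rw [corridorWalkCount, Nat.card_congr (Equiv.subtypeUnivEquiv fun _ ↦
    ⟨fun i ↦ i.elim0, fun j ↦ j.elim0⟩)]
  simp

lemma corridorWalkCount_succ (d n : ℕ) (a : ℤ) :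
    corridorWalkCount d (n + 1) a = ∑ x ∈ ({-1, 0, 1} : Finset ℤ),
      if a + x ∈ Set.Icc 1 ((d : ℤ) - 1) then corridorWalkCount d n (a + x) else 0 := by
  have fiber (x : ℤ) (hx : x ∈ ({-1, 0, 1} : Finset ℤ)) :
      Nat.card {s : Fin n → ℤ // IsCorridorWalk d a (Fin.cons x s)} =
        if a + x ∈ Set.Icc 1 ((d : ℤ) - 1) then corridorWalkCount d n (a + x) else 0 := by
    have hx : x ∈ ({-1, 0, 1} : Set ℤ) := by simpa using hx
    split_ifs with h
    · exact Nat.card_congr (Equiv.subtypeEquivRight fun s ↦ by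
        simp only [isCorridorWalk_cons_iff, hx, h, true_and])
    · simp [isCorridorWalk_cons_iff, h]
  have (x : ℤ) : Finite {s : Fin n → ℤ // IsCorridorWalk d a (Fin.cons x s)} :=
    Finite.of_injective (fun s ↦ (⟨Fin.cons x s.1, s.2⟩ : {r // IsCorridorWalk d a r}))
      fun _ _ h ↦ Subtype.ext <|
        Fin.cons_right_injective (α := fun _ ↦ ℤ) x (congrArg Subtype.val h)
  rw [corridorWalkCount, Nat.card_congr (IsCorridorWalk.consEquiv d n a), Nat.card_sigma,
    ← sum_coe_sort]
  exact sum_congr rfl fiber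

lemma corridorWalkCount_eq_of_recurrence {d : ℕ} {g : ℕ → ℤ → ℤ}
    (hinit : ∀ a ∈ Set.Icc 1 ((d : ℤ) - 1), g 0 a = 1)
    (hbot : ∀ n, g n 0 = 0) (htop : ∀ n, g n d = 0)
    (hsucc : ∀ n, ∀ a ∈ Set.Icc 1 ((d : ℤ) - 1),
      g (n + 1) a = g n (a - 1) + g n a + g n (a + 1))
    (n : ℕ) : ∀ a ∈ Set.Icc 1 ((d : ℤ) - 1), (corridorWalkCount d n a : ℤ) = g n a := by
  induction n with
  | zero => intro a ha; rw [corridorWalkCount_zero, hinit a ha, Nat.cast_one]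
  | succ n ih =>
    intro a ha
    have step (x : ℤ) (hx : x ∈ ({-1, 0, 1} : Finset ℤ)) :
        ((if a + x ∈ Set.Icc 1 ((d : ℤ) - 1) then corridorWalkCount d n (a + x) else 0 : ℕ) : ℤ)
          = g n (a + x) := by
      split_ifs with h
      · exact ih _ h
      · have : a + x = 0 ∨ a + x = d := by
          simp only [mem_insert, mem_singleton, Set.mem_Icc] at hx ha h; omega
        rcases this with h | h <;> simp [h, hbot, htop]
    rw [corridorWalkCount_succ, Nat.cast_sum, sum_congr rfl step, sum_neg_one_zero_one,
      hsucc n a ha, add_zero, ← sub_eq_add_neg]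

/-- The three-choice corridor number satisfies `c'_n = p_{n,n} − p_{n,n+d}` for the
up-sampled trinomial circular array of order `d`. -/
theorem motzkin_eq_trinomP_diff (d : ℕ) (hd : 2 ≤ d) (n : ℕ) :
    (motzkinCount d n : ℤ) =
      (trinomP d n (n : ℤ) : ℤ) - (trinomP d n ((n : ℤ) + d) : ℤ) := by
  have h₁ : (1 : ℤ) ∈ Set.Icc 1 ((d : ℤ) - 1) := ⟨le_rfl, by omega⟩
  calc (motzkinCount d n : ℤ)
      = corridorWalkCount d n 1 := rfl
    _ = trinomCumDiff d n 1 :=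
      corridorWalkCount_eq_of_recurrence (fun _ ↦ trinomCumDiff_zero_of_mem)
        (trinomCumDiff_of_nonpos d · le_rfl) (trinomCumDiff_self d)
        (fun n _ ha ↦ trinomCumDiff_succ d n ha.1) n 1 h₁
    _ = trinomDiff d n 1 := by simp [trinomCumDiff]
    _ = trinomDiff d n 0 := by rw [← trinomDiff_one_sub, sub_self]
    _ = _ := by simp [trinomDiff]
end
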